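/- arXiv:1003.3408 — 4 statements merged into one kernel-verified Lean document; each statement's English description precedes it below -/
import Mathlib

section
/- Let k be a field and A a commutative k-algebra that is an integral domain, graded by the product G₀ × G₁ of two additive abelian groups (so A = ⊕_{(d₀,d₁)} A_{(d₀,d₁)}). Suppose that e₁, …, e_r generate the group G₀ and that for each i = 1, …, r there is a unit g_i of A that is homogeneous of degree (e_i, 0). Then A is generated as a k-algebra by the Veronese subalgebra A¹ = ⊕_{d∈G₁} A_{(0,d)} together with the elements g₁, …, g_r and their inverses; that is, A equals the k-subalgebra generated by A¹ ∪ {g₁, g₁⁻¹, …, g_r, g_r⁻¹}. -/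
open DirectSum

/-- In a graded domain, the inverse of a homogeneous unit of degree `d` is
homogeneous of degree `-d`. -/
lemma aux_unit_inv_mem_neg {k : Type*} [Field k] {A : Type*} [CommRing A] [IsDomain A]
    [Algebra k A] {ι : Type*} [AddCommGroup ι] [DecidableEq ι]
    (𝒜 : ι → Submodule k A) [GradedAlgebra 𝒜] {d : ι} (u : Aˣ)
    (hu : (u : A) ∈ 𝒜 d) : ((u⁻¹ : Aˣ) : A) ∈ 𝒜 (-d) := by
  classical
  have key : ∀ e, e ≠ -d → (decompose 𝒜 ((u⁻¹ : Aˣ) : A) e : A) = 0 := by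
    intro e he
    have h1 : (decompose 𝒜 ((u : A) * ((u⁻¹ : Aˣ) : A)) (d + e) : A)
        = (u : A) * (decompose 𝒜 ((u⁻¹ : Aˣ) : A) e : A) :=
      DirectSum.coe_decompose_mul_add_of_left_mem 𝒜 hu
    rw [Units.mul_inv] at h1
    have hne : (0 : ι) ≠ d + e := fun h => he (by linear_combination (norm := abel) -h)
    have h2 : (decompose 𝒜 (1 : A) (d + e) : A) = 0 :=
      DirectSum.decompose_of_mem_ne 𝒜 (SetLike.one_mem_graded 𝒜) hne
    rw [h2] at h1
    rcases mul_eq_zero.mp h1.symm with h | h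
    · exact absurd h u.ne_zero
    · exact h
  have hsum := DirectSum.sum_support_decompose 𝒜 ((u⁻¹ : Aˣ) : A)
  rw [← hsum]
  apply Submodule.sum_mem
  intro e _
  by_cases h : e = -d
  · subst h; exact (decompose 𝒜 ((u⁻¹ : Aˣ) : A) (-d)).2
  · rw [key e h]; exact zero_mem _

/-- Let `A` be an integral domain, graded by a product `G₀ × G₁` of abelian groups,
with `e₁, …, e_r` generating `G₀` and homogeneous units `gᵢ` of degree `(eᵢ, 0)`.
Then `A` is generated as a `k`-algebra by the Veronese subalgebra
`A¹ = ⊕_{d ∈ G₁} A_{(0,d)}` together with the `gᵢ` and their inverses. -/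
theorem generated_by_veronese_and_homogeneous_units
    {k : Type*} [Field k] {A : Type*} [CommRing A] [IsDomain A] [Algebra k A]
    {G₀ G₁ : Type*} [AddCommGroup G₀] [AddCommGroup G₁]
    [DecidableEq G₀] [DecidableEq G₁]
    (𝒜 : G₀ × G₁ → Submodule k A) [GradedAlgebra 𝒜]
    {r : ℕ} (e : Fin r → G₀) (he : AddSubgroup.closure (Set.range e) = ⊤)
    (g : Fin r → Aˣ) (hg : ∀ i, (g i : A) ∈ 𝒜 (e i, 0)) :
    Algebra.adjoin k
        ((⋃ d : G₁, (𝒜 (0, d) : Set A))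
          ∪ (Set.range fun i => (g i : A))
          ∪ (Set.range fun i => (((g i)⁻¹ : Aˣ) : A))) = ⊤ := by
  classical
  set S := Algebra.adjoin k
        ((⋃ d : G₁, (𝒜 (0, d) : Set A))
          ∪ (Set.range fun i => (g i : A))
          ∪ (Set.range fun i => (((g i)⁻¹ : Aˣ) : A))) with hS
  -- the set of degrees d₀ realized by a homogeneous unit lying in S with inverse in S
  let T : AddSubgroup G₀ :=
    { carrier := {d | ∃ u : Aˣ, (u : A) ∈ 𝒜 (d, 0) ∧ (u : A) ∈ S ∧ ((u⁻¹ : Aˣ) : A) ∈ S}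
      zero_mem' := ⟨1, SetLike.one_mem_graded 𝒜, one_mem S, by simpa using one_mem S⟩
      add_mem' := by
        rintro a b ⟨u, hu, huS, huS'⟩ ⟨v, hv, hvS, hvS'⟩
        exact ⟨u * v, by simpa using SetLike.mul_mem_graded hu hv,
          by simpa using mul_mem huS hvS, by simpa [mul_comm] using mul_mem huS' hvS'⟩
      neg_mem' := by
        rintro a ⟨u, hu, huS, huS'⟩
        exact ⟨u⁻¹, by simpa [Prod.neg_mk] using aux_unit_inv_mem_neg 𝒜 u hu,
          huS', by simpa using huS⟩ }
  have hTtop : T = ⊤ := by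
    rw [← top_le_iff, ← he]
    apply AddSubgroup.closure_le T |>.mpr
    rintro d ⟨i, rfl⟩
    refine ⟨g i, hg i, Algebra.subset_adjoin ?_, Algebra.subset_adjoin ?_⟩
    · exact Or.inl (Or.inr ⟨i, rfl⟩)
    · exact Or.inr ⟨i, rfl⟩
  -- every homogeneous element is in S
  have hhom : ∀ (d : G₀ × G₁) (a : A), a ∈ 𝒜 d → a ∈ S := by
    rintro ⟨d₀, d₁⟩ a ha
    obtain ⟨u, hu, huS, huS'⟩ : d₀ ∈ T := hTtop ▸ AddSubgroup.mem_top d₀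
    have hinv : ((u⁻¹ : Aˣ) : A) ∈ 𝒜 (-d₀, 0) := by
      simpa [Prod.neg_mk] using aux_unit_inv_mem_neg 𝒜 u hu
    have hmul : a * ((u⁻¹ : Aˣ) : A) ∈ 𝒜 (0, d₁) := by
      simpa using SetLike.mul_mem_graded ha hinv
    have h1 : a * ((u⁻¹ : Aˣ) : A) ∈ S :=
      Algebra.subset_adjoin (Or.inl (Or.inl (Set.mem_iUnion.mpr ⟨d₁, hmul⟩)))
    have : a * ((u⁻¹ : Aˣ) : A) * (u : A) ∈ S := mul_mem h1 huS
    simpa [mul_assoc] using this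
  rw [eq_top_iff]
  intro a _
  have hsum := DirectSum.sum_support_decompose 𝒜 a
  rw [← hsum]
  exact sum_mem fun d _ => hhom d _ (decompose 𝒜 a d).2
end

section
/- Let k be a field and A a commutative k-algebra that is an integral domain, graded by the product G₀ × G₁ of two additive abelian groups. Suppose that e₁, …, e_r generate the group G₀, that for each i there is a unit g_i of A that is homogeneous of degree (e_i, 0), and that the Veronese subalgebra A¹ = ⊕_{d∈G₁} A_{(0,d)} is a finitely generated k-algebra. Then A is a finitely generated k-algebra. -/
/-!
Let `T` be the subalgebra generated by finitely many generators of the Veronese subalgebra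
together with the units `gᵢ` and their inverses. The inverse of a homogeneous unit is
homogeneous of the opposite degree, so the degrees `d` admitting a homogeneous unit `u` with
`u, u⁻¹ ∈ T` form a subgroup; it contains every `(eᵢ, 0)`, hence all of `G₀ × 0`. Choosing such
a unit `u` of degree `(d₀, 0)`, any `x ∈ A_{(d₀, d₁)}` is `u * (u⁻¹ * x)` with `u⁻¹ * x` in the
Veronese subalgebra, so every graded piece of `A`, and hence `A` itself, lies in `T`.
-/

open DirectSum

namespace GradedRing

variable {ι A σ : Type*} [DecidableEq ι] [AddGroup ι] [Semiring A]
  [SetLike σ A] [AddSubmonoidClass σ A] (𝒜 : ι → σ) [GradedRing 𝒜]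

theorem coe_inv_mem_neg {u : Aˣ} {a : ι} (hu : (u : A) ∈ 𝒜 a) : ((u⁻¹ : Aˣ) : A) ∈ 𝒜 (-a) := by
  have hcomp : (u : A) * decompose 𝒜 ((u⁻¹ : Aˣ) : A) (-a) = 1 := by
    rw [← coe_decompose_mul_add_of_left_mem 𝒜 hu, add_neg_cancel, Units.mul_inv,
      decompose_of_mem_same 𝒜 SetLike.GradedOne.one_mem]
  rw [Units.inv_eq_of_mul_eq_one_right hcomp]
  exact SetLike.coe_mem _

end GradedRing

namespace GradedAlgebra

variable {ι R A : Type*} [DecidableEq ι] [AddGroup ι] [CommSemiring R] [Semiring A]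
  [Algebra R A] (𝒜 : ι → Submodule R A) [GradedAlgebra 𝒜]

def unitDegrees (T : Subalgebra R A) : AddSubgroup ι where
  carrier := {a | ∃ u : Aˣ, (u : A) ∈ 𝒜 a ∧ (u : A) ∈ T ∧ ((u⁻¹ : Aˣ) : A) ∈ T}
  zero_mem' := ⟨1, SetLike.GradedOne.one_mem, T.one_mem, by simp [T.one_mem]⟩
  add_mem' := by
    rintro a b ⟨u, hu, huT, hu'T⟩ ⟨v, hv, hvT, hv'T⟩
    refine ⟨u * v, SetLike.mul_mem_graded hu hv, T.mul_mem huT hvT, ?_⟩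
    rw [mul_inv_rev, Units.val_mul]
    exact T.mul_mem hv'T hu'T
  neg_mem' := by
    rintro a ⟨u, hu, huT, hu'T⟩
    exact ⟨u⁻¹, GradedRing.coe_inv_mem_neg 𝒜 hu, hu'T, by rwa [inv_inv]⟩

theorem grade_add_le_of_unit_mem {T : Subalgebra R A} {u : Aˣ} {a b : ι}
    (hu : (u : A) ∈ 𝒜 a) (huT : (u : A) ∈ T) (hb : 𝒜 b ≤ Subalgebra.toSubmodule T) :
    𝒜 (a + b) ≤ Subalgebra.toSubmodule T := by
  intro x hx
  have hux : ((u⁻¹ : Aˣ) : A) * x ∈ 𝒜 b := by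
    simpa using SetLike.mul_mem_graded (GradedRing.coe_inv_mem_neg 𝒜 hu) hx
  rw [← Units.mul_inv_cancel_left u x]
  exact T.mul_mem huT (hb hux)

theorem subalgebra_eq_top_of_grade_le {T : Subalgebra R A}
    (hT : ∀ i, 𝒜 i ≤ Subalgebra.toSubmodule T) : T = ⊤ := by
  rw [← Algebra.toSubmodule_eq_top, eq_top_iff,
    ← (Decomposition.isInternal 𝒜).submodule_iSup_eq_top]
  exact iSup_le hT

end GradedAlgebra

open GradedAlgebra in
theorem finiteType_of_veronese_finiteType_and_homogeneous_units_general
    {k : Type*} [Field k] {A : Type*} [CommRing A] [Algebra k A]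
    {G₀ G₁ : Type*} [AddCommGroup G₀] [AddCommGroup G₁]
    [DecidableEq G₀] [DecidableEq G₁]
    (𝒜 : G₀ × G₁ → Submodule k A) [GradedAlgebra 𝒜]
    {r : ℕ} (e : Fin r → G₀) (he : AddSubgroup.closure (Set.range e) = ⊤)
    (g : Fin r → Aˣ) (hg : ∀ i, (g i : A) ∈ 𝒜 (e i, 0))
    (hV : (Algebra.adjoin k (⋃ d : G₁, (𝒜 (0, d) : Set A))).FG) :
    Algebra.FiniteType k A := by
  obtain ⟨S, hS⟩ := hV
  set gens : Set A := ↑S ∪ Set.range (fun i ↦ (g i : A)) ∪ Set.range (fun i ↦ (((g i)⁻¹ : Aˣ) : A))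
  set T := Algebra.adjoin k gens
  have hveronese (d : G₁) : 𝒜 (0, d) ≤ Subalgebra.toSubmodule T := by
    have hST : Algebra.adjoin k (⋃ d : G₁, (𝒜 (0, d) : Set A)) ≤ T := by
      rw [← hS]
      exact Algebra.adjoin_mono (Set.subset_union_left.trans Set.subset_union_left)
    exact fun x hx ↦ hST (Algebra.subset_adjoin (Set.mem_iUnion_of_mem d hx))
  have hunits (d : G₀) : (d, 0) ∈ unitDegrees 𝒜 T := by
    suffices ⊤ ≤ (unitDegrees 𝒜 T).comap (AddMonoidHom.inl G₀ G₁) from this trivial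
    rw [← he, AddSubgroup.closure_le]
    rintro _ ⟨i, rfl⟩
    exact ⟨g i, hg i, Algebra.subset_adjoin (by simp [gens]),
      Algebra.subset_adjoin (by simp [gens])⟩
  have htop : T = ⊤ := subalgebra_eq_top_of_grade_le 𝒜 fun ⟨d₀, d₁⟩ ↦ by
    obtain ⟨u, hu, huT, -⟩ := hunits d₀
    simpa using grade_add_le_of_unit_mem 𝒜 hu huT (hveronese d₁)
  have hfin : gens.Finite := (S.finite_toSet.union (Set.finite_range _)).union (Set.finite_range _)
  exact ⟨htop ▸ Subalgebra.fg_def.mpr ⟨gens, hfin, rfl⟩⟩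

/-- Let `A` be an integral domain, graded by a product `G₀ × G₁` of abelian groups,
with `e₁, …, e_r` generating `G₀` and homogeneous units `gᵢ` of degree `(eᵢ, 0)`.
If the Veronese subalgebra `A¹ = ⊕_{d ∈ G₁} A_{(0,d)}` is a finitely generated
`k`-algebra, then so is `A`. -/
theorem finiteType_of_veronese_finiteType_and_homogeneous_units
    {k : Type*} [Field k] {A : Type*} [CommRing A] [IsDomain A] [Algebra k A]
    {G₀ G₁ : Type*} [AddCommGroup G₀] [AddCommGroup G₁]
    [DecidableEq G₀] [DecidableEq G₁]
    (𝒜 : G₀ × G₁ → Submodule k A) [GradedAlgebra 𝒜]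
    {r : ℕ} (e : Fin r → G₀) (he : AddSubgroup.closure (Set.range e) = ⊤)
    (g : Fin r → Aˣ) (hg : ∀ i, (g i : A) ∈ 𝒜 (e i, 0))
    (hV : (Algebra.adjoin k (⋃ d : G₁, (𝒜 (0, d) : Set A))).FG) :
    Algebra.FiniteType k A :=
  finiteType_of_veronese_finiteType_and_homogeneous_units_general 𝒜 e he g hg hV
end

section
/- Let k be a field, A a commutative k-algebra that is an integral domain, graded by a finitely generated additive abelian group G, and let H ≤ G be a subgroup of finite index. If the Veronese subalgebra A_H = ⊕_{h∈H} A_h is a finitely generated k-algebra, then A is a finitely generated k-algebra. -/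
/-!
Write `B = A_H` and `n = [G : H]`. The ring `B` is noetherian, and `A` is the sum, over the
finitely many cosets `c` of `H`, of the `B`-submodules `M_c` spanned by the homogeneous
elements with degree in `c`. If `x ≠ 0` is homogeneous of degree `g ∈ c`, multiplication by
`x ^ (n - 1)` is injective because `A` is a domain, and moves degrees `e ∈ c` to
`n • g + (e - g) ∈ H`; so it embeds `M_c` into `B`, and `M_c` is finitely generated.
Hence `A` is a finite `B`-module, and a finitely generated `k`-algebra.
-/

open Submodule

theorem Submodule.fg_of_le_one {R A : Type*} [CommRing R] [IsNoetherianRing R] [Ring A]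
    [Algebra R A] {N : Submodule R A} (hN : N ≤ 1) : N.FG := by
  rw [one_eq_span] at hN
  exact (fg_span_singleton 1).of_le hN

theorem AddSubgroup.index_sub_one_nsmul_add_mem {G : Type*} [AddCommGroup G] (H : AddSubgroup G)
    [H.FiniteIndex] {g e : G} (hge : (g : G ⧸ H) = e) : (H.index - 1) • g + e ∈ H := by
  have hindex : H.index - 1 + 1 = H.index :=
    Nat.succ_pred_eq_of_ne_zero FiniteIndex.index_ne_zero
  have hsplit : (H.index - 1) • g + e = H.index • g + (-g + e) := by
    conv_rhs => rw [← hindex, succ_nsmul]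
    abel
  rw [hsplit]
  exact H.add_mem (H.nsmul_index_mem g) (QuotientAddGroup.eq.mp hge)

theorem Subalgebra.mem_one_submodule_of_mem {R A : Type*} [CommSemiring R] [CommSemiring A]
    [Algebra R A] {S : Subalgebra R A} {a : A} (ha : a ∈ S) : a ∈ (1 : Submodule S A) := by
  rw [one_eq_range]
  exact ⟨⟨a, ha⟩, rfl⟩

namespace GradedAlgebra

variable {k A G : Type*} [CommRing k] [CommRing A] [Algebra k A] [AddCommGroup G]
  (𝒜 : G → Submodule k A) (H : AddSubgroup G)

def veronese : Subalgebra k A :=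
  Algebra.adjoin k (⋃ h ∈ (H : Set G), (𝒜 h : Set A))

def cosetSubmodule (c : G ⧸ H) : Submodule (veronese 𝒜 H) A :=
  span (veronese 𝒜 H) {a : A | ∃ g : G, (g : G ⧸ H) = c ∧ a ∈ 𝒜 g}

variable {𝒜 H}

theorem mem_veronese_of_mem {h : G} (hh : h ∈ H) {a : A} (ha : a ∈ 𝒜 h) : a ∈ veronese 𝒜 H :=
  Algebra.subset_adjoin (Set.mem_biUnion hh ha)

variable (𝒜 H) [DecidableEq G] [GradedAlgebra 𝒜]

theorem iSup_cosetSubmodule_eq_top : ⨆ c, cosetSubmodule 𝒜 H c = ⊤ := by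
  rw [eq_top_iff]
  rintro a -
  induction a using DirectSum.Decomposition.inductionOn 𝒜 with
  | zero => exact zero_mem _
  | homogeneous m => exact mem_iSup_of_mem _ (subset_span ⟨_, rfl, m.2⟩)
  | add m m' hm hm' => exact add_mem hm hm'

theorem map_cosetSubmodule_mulLeft_pow_le_one [H.FiniteIndex] {g : G} {x : A} (hx : x ∈ 𝒜 g) :
    (cosetSubmodule 𝒜 H g).map (LinearMap.mulLeft (veronese 𝒜 H) (x ^ (H.index - 1))) ≤ 1 := by
  rw [cosetSubmodule, map_span, span_le]
  rintro _ ⟨a, ⟨e, hge, ha⟩, rfl⟩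
  have hxa : x ^ (H.index - 1) * a ∈ 𝒜 ((H.index - 1) • g + e) :=
    SetLike.mul_mem_graded (SetLike.pow_mem_graded _ hx) ha
  exact Subalgebra.mem_one_submodule_of_mem
    (mem_veronese_of_mem (H.index_sub_one_nsmul_add_mem hge.symm) hxa)

theorem cosetSubmodule_fg [IsDomain A] [H.FiniteIndex] [IsNoetherianRing (veronese 𝒜 H)]
    (c : G ⧸ H) : (cosetSubmodule 𝒜 H c).FG := by
  by_cases hc : ∃ g : G, (g : G ⧸ H) = c ∧ ∃ x ∈ 𝒜 g, x ≠ 0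
  · obtain ⟨g, rfl, x, hx, hx0⟩ := hc
    exact fg_of_fg_map_injective _ (fun a b hab => mul_left_cancel₀ (pow_ne_zero _ hx0) hab)
      (fg_of_le_one (map_cosetSubmodule_mulLeft_pow_le_one 𝒜 H hx))
  · push Not at hc
    have hbot : cosetSubmodule 𝒜 H c = ⊥ :=
      span_eq_bot.mpr fun a ⟨g, hg, ha⟩ => hc g hg a ha
    exact hbot ▸ fg_bot

theorem module_finite_veronese [IsDomain A] [H.FiniteIndex] [IsNoetherianRing (veronese 𝒜 H)] :
    Module.Finite (veronese 𝒜 H) A :=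
  .of_fg_top (iSup_cosetSubmodule_eq_top 𝒜 H ▸ fg_iSup _ (cosetSubmodule_fg 𝒜 H))

end GradedAlgebra

theorem finiteType_of_veronese_finiteType_finiteIndex_general
    {k A G : Type*} [Field k] [CommRing A] [IsDomain A] [Algebra k A]
    [AddCommGroup G] [DecidableEq G]
    (𝒜 : G → Submodule k A) [GradedAlgebra 𝒜]
    (H : AddSubgroup G) [H.FiniteIndex]
    (hV : (Algebra.adjoin k (⋃ h ∈ (H : Set G), (𝒜 h : Set A))).FG) :
    Algebra.FiniteType k A := by
  have hB : Algebra.FiniteType k (GradedAlgebra.veronese 𝒜 H) :=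
    (Subalgebra.fg_iff_finiteType _).mp hV
  have : IsNoetherianRing (GradedAlgebra.veronese 𝒜 H) := Algebra.FiniteType.isNoetherianRing k _
  have : Module.Finite (GradedAlgebra.veronese 𝒜 H) A := GradedAlgebra.module_finite_veronese 𝒜 H
  exact hB.trans (Module.Finite.finiteType _)

/-- Let `A` be an integral domain graded by a finitely generated abelian group `G`
and `H ≤ G` a finite-index subgroup. If the Veronese subalgebra
`A_H = ⊕_{h ∈ H} A_h` is a finitely generated `k`-algebra, then so is `A`. -/
theorem finiteType_of_veronese_finiteType_finiteIndex
    {k A G : Type*} [Field k] [CommRing A] [IsDomain A] [Algebra k A]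
    [AddCommGroup G] [AddGroup.FG G] [DecidableEq G]
    (𝒜 : G → Submodule k A) [GradedAlgebra 𝒜]
    (H : AddSubgroup G) [H.FiniteIndex]
    (hV : (Algebra.adjoin k (⋃ h ∈ (H : Set G), (𝒜 h : Set A))).FG) :
    Algebra.FiniteType k A :=
  finiteType_of_veronese_finiteType_finiteIndex_general 𝒜 H hV
end

section
/- Let k be a field, A a finitely generated commutative k-algebra graded by a finitely generated additive abelian group G, and let H ≤ G be any subgroup. Then the Veronese subalgebra A_H = ⊕_{h∈H} A_h is a finitely generated k-algebra. -/
/-!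
Pick finitely many homogeneous generators `x i ∈ 𝒜 (d i)`. Then `A` is spanned by the monomials
`x ^ a`, `a : ι →₀ ℕ`, and `x ^ a` has degree `∑ a i • d i`; projecting onto a degree `h ∈ H`
shows that `A_H` is generated by the monomials with exponent in `S = {a | ∑ a i • d i ∈ H}`.
Since `H` is a subgroup, `S` is closed under differences of comparable exponents, so it is finitely
generated by Gordan's lemma, and the monomials of its generators generate `A_H`.
-/

open DirectSum

namespace GradedAlgebra

variable {R A ι : Type*} [CommSemiring R] [CommSemiring A] [Algebra R A]
  [DecidableEq ι] [AddMonoid ι] (𝒜 : ι → Submodule R A) [GradedAlgebra 𝒜]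

theorem exists_homogeneous_finset_adjoin_eq_top [Algebra.FiniteType R A] :
    ∃ s : Finset A, Algebra.adjoin R (s : Set A) = ⊤ ∧
      ∀ x ∈ s, SetLike.IsHomogeneousElem 𝒜 x := by
  classical
  obtain ⟨F, hF⟩ := Algebra.FiniteType.out (R := R) (A := A)
  refine ⟨F.biUnion fun a ↦ (decompose 𝒜 a).support.image fun i ↦ (decompose 𝒜 a i : A),
    top_unique ?_, ?_⟩
  · rw [← hF, Algebra.adjoin_le_iff]
    intro a ha
    rw [← sum_support_decompose 𝒜 a]
    exact sum_mem fun i hi ↦ Algebra.subset_adjoin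
      (by simpa using ⟨a, ha, i, DFinsupp.mem_support_iff.mp hi, rfl⟩)
  · simp only [Finset.mem_biUnion, Finset.mem_image]
    rintro _ ⟨a, -, i, -, rfl⟩
    exact ⟨i, (decompose 𝒜 a i).2⟩

end GradedAlgebra

namespace DirectSum

variable {R M ι : Type*} [Semiring R] [AddCommMonoid M] [Module R M] [DecidableEq ι]
  (ℳ : ι → Submodule R M) [Decomposition ℳ]

theorem coe_decompose_mem_span_image {α : Type*} {f : α → M} {deg : α → ι}
    (hf : ∀ a, f a ∈ ℳ (deg a)) {m : M} (hm : m ∈ Submodule.span R (Set.range f)) (i : ι) :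
    (decompose ℳ m i : M) ∈ Submodule.span R (f '' {a | deg a = i}) := by
  induction hm using Submodule.span_induction with
  | mem _ h =>
    obtain ⟨a, rfl⟩ := h
    by_cases ha : deg a = i
    · subst ha
      rw [decompose_of_mem_same ℳ (hf a)]
      exact Submodule.subset_span ⟨a, rfl, rfl⟩
    · rw [decompose_of_mem_ne ℳ (hf a) ha]
      exact zero_mem _
  | zero => simp
  | add _ _ _ _ h₁ h₂ =>
    rw [decompose_add, add_apply, Submodule.coe_add]
    exact add_mem h₁ h₂
  | smul r _ _ h =>
    rw [decompose_smul, smul_apply, Submodule.coe_smul]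
    exact Submodule.smul_mem _ r h

end DirectSum

theorem AddSubgroup.fg_comap_toAddSubmonoid {M G : Type*} [AddCommMonoid M] [PartialOrder M]
    [WellQuasiOrderedLE M] [IsOrderedCancelAddMonoid M] [CanonicallyOrderedAdd M] [AddGroup G]
    (H : AddSubgroup G) (φ : M →+ G) : (H.toAddSubmonoid.comap φ).FG :=
  AddSubmonoid.fg_of_subtractive fun a ha b hab ↦ by
    simpa [H.add_mem_cancel_left ha] using hab

namespace Finsupp

theorem prod_pow_mem_graded {ι G A σ : Type*} [AddCommMonoid G] [CommMonoid A] [SetLike σ A]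
    (𝒜 : G → σ) [SetLike.GradedMonoid 𝒜] {x : ι → A} {d : ι → G} (hx : ∀ i, x i ∈ 𝒜 (d i))
    (a : ι →₀ ℕ) : a.prod (x · ^ ·) ∈ 𝒜 (weight d a) :=
  SetLike.prod_pow_mem_graded 𝒜 d x a fun i _ ↦ hx i

end Finsupp

namespace Algebra

variable {R A ι : Type*} [CommSemiring R] [CommSemiring A] [Algebra R A] (x : ι → A)

theorem adjoin_range_eq_span_prod_pow :
    Subalgebra.toSubmodule (adjoin R (Set.range x)) =
      Submodule.span R (Set.range fun a : ι →₀ ℕ ↦ a.prod (x · ^ ·)) := by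
  rw [adjoin_eq_span]
  congr 1
  ext y
  simp [Submonoid.mem_closure_range_iff, eq_comm]

theorem adjoin_image_prod_pow_closure (F : Set (ι →₀ ℕ)) :
    adjoin R ((fun a : ι →₀ ℕ ↦ a.prod (x · ^ ·)) '' AddSubmonoid.closure F) =
      adjoin R ((fun a : ι →₀ ℕ ↦ a.prod (x · ^ ·)) '' F) := by
  refine le_antisymm (adjoin_le ?_) (adjoin_mono (Set.image_mono AddSubmonoid.subset_closure))
  rintro _ ⟨a, ha, rfl⟩
  dsimp only
  induction ha using AddSubmonoid.closure_induction with
  | mem a ha => exact subset_adjoin ⟨a, ha, rfl⟩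
  | zero => simp
  | add a b _ _ iha ihb =>
    rw [Finsupp.prod_add_index' (fun _ ↦ pow_zero _) (fun _ ↦ pow_add _)]
    exact mul_mem iha ihb

end Algebra

theorem GradedAlgebra.adjoin_iUnion_eq_adjoin_prod_pow {R A ι G : Type*} [CommSemiring R]
    [CommSemiring A] [Algebra R A] [DecidableEq G] [AddCommMonoid G] (𝒜 : G → Submodule R A)
    [GradedAlgebra 𝒜] {x : ι → A} {d : ι → G} (hx : ∀ i, x i ∈ 𝒜 (d i))
    (hx_top : Algebra.adjoin R (Set.range x) = ⊤) (T : Set G) :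
    Algebra.adjoin R (⋃ g ∈ T, (𝒜 g : Set A)) =
      Algebra.adjoin R ((fun a : ι →₀ ℕ ↦ a.prod (x · ^ ·)) '' (Finsupp.weight d ⁻¹' T)) := by
  refine le_antisymm (Algebra.adjoin_le ?_) (Algebra.adjoin_le ?_)
  · simp only [Set.iUnion_subset_iff]
    intro g hg v hv
    have hv_span : v ∈ Submodule.span R (Set.range fun a : ι →₀ ℕ ↦ a.prod (x · ^ ·)) := by
      rw [← Algebra.adjoin_range_eq_span_prod_pow, hx_top]
      exact Submodule.mem_top
    have hv_deg := DirectSum.coe_decompose_mem_span_image 𝒜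
      (Finsupp.prod_pow_mem_graded 𝒜 hx) hv_span g
    rw [DirectSum.decompose_of_mem_same 𝒜 hv] at hv_deg
    refine Algebra.adjoin_mono (Set.image_mono ?_) (Algebra.span_le_adjoin R _ hv_deg)
    rintro a rfl
    exact hg
  · rintro _ ⟨a, ha, rfl⟩
    exact Algebra.subset_adjoin (Set.mem_biUnion ha (Finsupp.prod_pow_mem_graded 𝒜 hx a))

theorem veronese_fg_of_finiteType_general
    {k A G : Type*} [Field k] [CommRing A] [Algebra k A]
    [AddCommGroup G] [DecidableEq G]
    (𝒜 : G → Submodule k A) [GradedAlgebra 𝒜]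
    [Algebra.FiniteType k A]
    (H : AddSubgroup G) :
    (Algebra.adjoin k (⋃ h ∈ (H : Set G), (𝒜 h : Set A))).FG := by
  classical
  obtain ⟨s, hs_top, hs_hom⟩ := GradedAlgebra.exists_homogeneous_finset_adjoin_eq_top 𝒜
  choose d hd using hs_hom
  let deg : s → G := fun x ↦ d x x.2
  obtain ⟨F, hF⟩ := H.fg_comap_toAddSubmonoid (Finsupp.weight (R := ℕ) deg)
  refine ⟨F.image fun a : s →₀ ℕ ↦ a.prod fun x n ↦ (x : A) ^ n, ?_⟩
  rw [Finset.coe_image, ← Algebra.adjoin_image_prod_pow_closure, hF,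
    GradedAlgebra.adjoin_iUnion_eq_adjoin_prod_pow 𝒜 (fun x : s ↦ hd x x.2)
      (by rwa [Subtype.range_coe]) H]
  rfl

/-- The Veronese subalgebra `A_H = ⊕_{h ∈ H} A_h` of a finitely generated
`k`-algebra `A` graded by a finitely generated abelian group `G` is a finitely
generated `k`-algebra, for any subgroup `H ≤ G`. -/
theorem veronese_fg_of_finiteType
    {k A G : Type*} [Field k] [CommRing A] [Algebra k A]
    [AddCommGroup G] [AddGroup.FG G] [DecidableEq G]
    (𝒜 : G → Submodule k A) [GradedAlgebra 𝒜]
    [Algebra.FiniteType k A]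
    (H : AddSubgroup G) :
    (Algebra.adjoin k (⋃ h ∈ (H : Set G), (𝒜 h : Set A))).FG :=
  veronese_fg_of_finiteType_general 𝒜 H
end
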